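/- arXiv:2004.12870 — 3 statements merged into one kernel-verified Lean document; each statement's English description precedes it below -/
import Mathlib

section
/- For n ≥ 3, pairwise distinct indices i, j, h, and any a, b, c in an associative ring R with 1, setting y_{ij}(a,b) = [t_{ij}(a), t_{ji}(b)], one has the identity [t_{ih}(c), y_{ij}(a,b)] = t_{ih}(-abc - ababc)·t_{jh}(-babc) in GL(n,R). -/
open Matrix
open scoped commutatorElement

/-- `GL(n,R)` over an associative ring `R` with `1`, as units of the matrix ring. -/
abbrev GLn (n : ℕ) (R : Type*) [Ring R] := (Matrix (Fin n) (Fin n) R)ˣ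

/-- The elementary transvection `t_{ij}(c) = e + c·e_{ij}`, for `i ≠ j`. -/
def t {R : Type*} [Ring R] {n : ℕ} (i j : Fin n) (hij : i ≠ j) (c : R) :
    GLn n R :=
  ⟨1 + Matrix.single i j c, 1 - Matrix.single i j c,
   by
    have h0 : single i j c * single i j c = 0 :=
      by simp [hij.symm]
    noncomm_ring
    simp [h0],
   by
    have h0 : single i j c * single i j c = 0 :=
      by simp [hij.symm]
    noncomm_ring
    simp [h0]⟩

lemma mul_std {R : Type*} [Ring R] {n : ℕ} (p q r s : Fin n) (x y : R) :
    single p q x * single r s y =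
      if q = r then single p s (x * y) else 0 := by
  split
  · subst ‹q = r›; exact single_mul_single_same (c := x) p q s y
  · exact single_mul_single_of_ne (c := x) p q r ‹q ≠ r› y

lemma std_neg {R : Type*} [Ring R] {n : ℕ} (p q : Fin n) (x : R) :
    single p q (-x) = -single p q x := by
  ext r s
  simp only [single, of_apply, Matrix.neg_apply]
  split <;> simp

set_option maxHeartbeats 1000000 in
theorem stmt1 {R : Type*} [Ring R] {n : ℕ} (hn : 3 ≤ n) (i j h : Fin n)
    (hij : i ≠ j) (hih : i ≠ h) (hjh : j ≠ h) (a b c : R) :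
    ⁅t i h hih c, ⁅t i j hij a, t j i hij.symm b⁆⁆ =
      t i h hih (-(a * b * c) - a * b * a * b * c) * t j h hjh (-(b * a * b * c)) := by
  apply Units.ext
  have hY : (⁅t i j hij a, t j i hij.symm b⁆ : GLn n R).val
      = 1 + single i i (a * b) + single i i (a * (b * (a * b)))
        - single j j (b * a)
        - single i j (a * (b * a)) + single j i (b * (a * b)) := by
    simp only [commutatorElement_def, t, Units.inv_mk, Units.val_mul, Units.val_mk]
    noncomm_ring
    simp only [mul_std, mul_assoc, hij, hih, hjh, hij.symm, hih.symm, hjh.symm, ite_true,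
      ite_false, reduceIte]
    noncomm_ring
  have hYinv : ((⁅t i j hij a, t j i hij.symm b⁆ : GLn n R)⁻¹).val
      = 1 + single j j (b * a) + single j j (b * (a * (b * a)))
        - single i i (a * b)
        - single j i (b * (a * b)) + single i j (a * (b * a)) := by
    rw [commutatorElement_inv]
    simp only [commutatorElement_def, t, Units.inv_mk, Units.val_mul, Units.val_mk]
    noncomm_ring
    simp only [mul_std, mul_assoc, hij, hih, hjh, hij.symm, hih.symm, hjh.symm, ite_true,
      ite_false, reduceIte]
    noncomm_ring
  rw [commutatorElement_def]
  simp only [Units.val_mul]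
  rw [hY, hYinv]
  simp only [t, Units.inv_mk, Units.val_mk]
  noncomm_ring
  simp only [mul_std, mul_assoc, hij, hih, hjh, hij.symm, hih.symm, hjh.symm, ite_true,
    ite_false, reduceIte, sub_eq_add_neg, neg_add, neg_neg, single_add, std_neg,
    mul_neg]
  noncomm_ring
  simp only [neg_one_zsmul, std_neg, mul_std, hjh.symm, hih.symm, ite_false, reduceIte,
    mul_neg, neg_neg, neg_mul, neg_zero, add_zero, zero_add]
end

section
/- For n ≥ 3, pairwise distinct indices i, j, h, and any a, b, c in an associative ring R with 1, one has the identity [t_{jh}(c), y_{ij}(a,b)] = t_{ih}(abac)·t_{jh}(bac) in GL(n,R), where y_{ij}(a,b) = [t_{ij}(a), t_{ji}(b)]. -/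
open Matrix
open scoped commutatorElement

set_option maxHeartbeats 1000000 in
theorem stmt2 {R : Type*} [Ring R] {n : ℕ} (hn : 3 ≤ n) (i j h : Fin n)
    (hij : i ≠ j) (hih : i ≠ h) (hjh : j ≠ h) (a b c : R) :
    ⁅t j h hjh c, ⁅t i j hij a, t j i hij.symm b⁆⁆ =
      t i h hih (a * b * a * c) * t j h hjh (b * a * c) := by
  apply Units.ext
  have hE : ∀ (p q r s : Fin n) (x y : R), q ≠ r →
      single p q x * single r s y = 0 := fun p q r s x y hqr =>
    single_mul_single_of_ne (c := x) p q r hqr y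
  set A := single i j a with hA
  set B := single j i b with hB
  have hY : (⁅t i j hij a, t j i hij.symm b⁆ : GLn n R).val
      = 1 + single i i (a*b) - single j j (b*a)
        - single i j (a*b*a) + single j i (b*a*b)
        + single i i (a*b*a*b) := by
    show (1 + A) * (1 + B) * (1 - A) * (1 - B) = _
    noncomm_ring
    simp [hA, hB, hE, single_mul_single_same, hij, hij.symm, mul_assoc]
  have hYinv : ((⁅t i j hij a, t j i hij.symm b⁆ : GLn n R)⁻¹ : GLn n R).val
      = 1 + single j j (b*a) - single i i (a*b)
        - single j i (b*a*b) + single i j (a*b*a)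
        + single j j (b*a*b*a) := by
    show (1 + B) * ((1 + A) * ((1 - B) * (1 - A))) = _
    noncomm_ring
    simp [hA, hB, hE, single_mul_single_same, hij, hij.symm, mul_assoc]
  show (1 + single j h c) * _ * (1 - single j h c) * _ = _
  rw [hY, hYinv]
  show _ = (1 + single i h (a*b*a*c)) * (1 + single j h (b*a*c))
  noncomm_ring
  simp [hE, single_mul_single_same, hij, hih, hjh, hij.symm, hih.symm, hjh.symm,
    mul_assoc]
  abel
end

section
/- For n ≥ 3, distinct indices i ≠ j, an index h distinct from both, and any a, b in an associative ring R with 1, the elementary commutator y_{ij}(a,b) = [t_{ij}(a), t_{ji}(b)] can be written as t_{ij}(a) · (t_{ji}(b) · [t_{ih}(a), t_{hj}(-1)] · t_{ji}(b)⁻¹) in GL(n,R). -/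
open Matrix
open scoped commutatorElement

lemma comm_t {R : Type*} [Ring R] {n : ℕ} (i j h : Fin n)
    (hij : i ≠ j) (hih : i ≠ h) (hhj : h ≠ j) (a : R) :
    ⁅t i h hih a, t h j hhj (-1 : R)⁆ = (t i j hij a)⁻¹ := by
  apply Units.ext
  have hAB : single i h a * single h j (-1 : R) =
      -single i j a := by
    rw [single_mul_single_same]
    ext i' j'
    simp [single]
    split <;> simp
  have hBA : single h j (-1 : R) * single i h a = 0 :=
    Matrix.single_mul_single_of_ne (-1) h j i (Ne.symm hij) a
  have hAA : single i h a * single i h a = 0 :=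
    Matrix.single_mul_single_of_ne a i h i hih.symm a
  have hBB : single h j (-1 : R) * single h j (-1 : R) = 0 :=
    Matrix.single_mul_single_of_ne (-1) h j h hhj.symm (-1)
  simp only [commutatorElement_def, t, Units.inv_mk, Units.val_mul, Units.val_mk]
  have hAC : single i h a * single i j a = 0 :=
    Matrix.single_mul_single_of_ne a i h i hih.symm a
  generalize single i h a = A at *
  generalize single h j (-1 : R) = B at *
  generalize single i j a = C at *
  have e1 : (1 + B) * (1 - A) = 1 - A + B := by
    have e : (1 + B) * (1 - A) = 1 - A + B - B * A := by noncomm_ring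
    rw [e, hBA, sub_zero]
  have e2 : (1 - A + B) * (1 - B) = 1 - A - C := by
    have e : (1 - A + B) * (1 - B) = 1 - A + A * B - B * B := by noncomm_ring
    rw [e, hAB, hBB, sub_zero]
    abel
  rw [mul_assoc (1 + A), e1, mul_assoc (1 + A), e2]
  have e3 : (1 + A) * (1 - A - C) = 1 - C - A * A - A * C := by noncomm_ring
  rw [e3, hAA, hAC, sub_zero, sub_zero]

theorem stmt5 {R : Type*} [Ring R] {n : ℕ} (hn : 3 ≤ n) (i j h : Fin n)
    (hij : i ≠ j) (hih : i ≠ h) (hhj : h ≠ j) (a b : R) :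
    ⁅t i j hij a, t j i hij.symm b⁆ =
      t i j hij a *
        (t j i hij.symm b * ⁅t i h hih a, t h j hhj (-1 : R)⁆ * (t j i hij.symm b)⁻¹) := by
  rw [comm_t i j h hij hih hhj a]
  group
end
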